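/- Let T be an ω₁-tree, U ⊆ T a stationary open set in the tree topology, B any metric space, and ψ : U → B continuous (with respect to the subspace tree topology on U), such that each fiber ψ⁻¹{b} (b ∈ B) is discrete in the tree topology. Then there are infinitely many b ∈ B such that ψ⁻¹(N_ε(b)) is stationary for every ε > 0, where N_ε(b) = {z ∈ B : d(b,z) < ε}. -/

import Mathlib

/-- A tree: a type `T` with a strict partial order `lt` such that for each `x`,
the set of predecessors of `x` is well-ordered by `lt`. -/
structure TreeOrder (T : Type) where
  lt : T → T → Prop
  trans : ∀ {x y z : T}, lt x y → lt y z → lt x z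
  irrefl : ∀ x : T, ¬ lt x x
  wellOrdered : ∀ x : T, IsWellOrder {y : T // lt y x} fun a b => lt a.1 b.1

namespace TreeOrder

variable {T : Type} (S : TreeOrder T)

/-- `x↓`, the set of predecessors of `x`. -/
def below (x : T) : Set T := {y | S.lt y x}

/-- `x↑`, the set of elements above `x`. -/
def above (x : T) : Set T := {y | S.lt x y}

/-- The height of a node: the order type of `x↓`. -/
noncomputable def height (x : T) : Ordinal :=
  @Ordinal.type {y : T // S.lt y x} (fun a b => S.lt a.1 b.1) (S.wellOrdered x)

/-- The `α`-th level `L_α(T)`. -/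
def level (α : Ordinal) : Set T := {x | S.height x = α}

/-- A set `U` is open in the tree topology iff for every `y ∈ U` of limit height
there is `x ◁ y` with `x↑ ∩ y↓ ⊆ U`. -/
def TreeOpen (U : Set T) : Prop :=
  ∀ y ∈ U, Order.IsSuccLimit (S.height y) →
    ∃ x, S.lt x y ∧ ∀ z, S.lt x z → S.lt z y → z ∈ U

/-- Continuity with respect to the tree topology on `T`:
preimages of open sets are open in the tree topology. -/
def TContinuous {B : Type} [TopologicalSpace B] (ψ : T → B) : Prop :=
  ∀ V : Set B, IsOpen V → S.TreeOpen (ψ ⁻¹' V)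

/-- `A ⊆ T` is discrete in the tree topology: every point of `A` is isolated in `A`. -/
def TDiscrete (A : Set T) : Prop :=
  ∀ a ∈ A, ∃ U : Set T, S.TreeOpen U ∧ a ∈ U ∧ U ∩ A = {a}

/-- `T` is an `ω₁`-tree: it has cardinality `ℵ₁`, all levels are countable, and
the level `ω₁` is empty. -/
def IsOmega1Tree : Prop :=
  Cardinal.mk T = Cardinal.aleph 1 ∧
  (∀ α : Ordinal, (S.level α).Countable) ∧
  S.level (Cardinal.aleph 1).ord = ∅

/-- An Aronszajn tree is an `ω₁`-tree with no uncountable chains. -/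
def IsAronszajn : Prop :=
  S.IsOmega1Tree ∧ ∀ C : Set T, IsChain S.lt C → C.Countable

/-- A special Aronszajn tree: an Aronszajn tree which is a countable union of antichains. -/
def IsSpecialAronszajn : Prop :=
  S.IsAronszajn ∧
  ∃ A : ℕ → Set T, (∀ n, IsAntichain S.lt (A n)) ∧ (⋃ n, A n) = Set.univ

end TreeOrder

/-- `C` is closed in `κ`: it contains each of its limit points below `κ`. -/
def IsClosedIn (C : Set Ordinal.{0}) (κ : Ordinal.{0}) : Prop :=
  ∀ α < κ, α ≠ 0 → (∀ β < α, ∃ γ ∈ C, β < γ ∧ γ < α) → α ∈ C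

/-- `C` is club in `κ`: closed and unbounded in `κ`. -/
def IsClubIn (C : Set Ordinal.{0}) (κ : Ordinal.{0}) : Prop :=
  IsClosedIn C κ ∧ ∀ α < κ, ∃ β ∈ C, α < β ∧ β < κ

/-- `A` is stationary in `κ`: it meets every club subset of `κ`. -/
def IsStationaryIn (A : Set Ordinal.{0}) (κ : Ordinal.{0}) : Prop :=
  ∀ C : Set Ordinal, IsClubIn C κ → (A ∩ C).Nonempty

/-- A subset of a tree is stationary iff its set of heights is stationary in `ω₁`. -/
def TreeOrder.TStationary {T : Type} (S : TreeOrder T) (A : Set T) : Prop :=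
  IsStationaryIn (S.height '' A) (Cardinal.aleph 1).ord

/-- The pruning `U^p` of `U`: all `x ∈ U` such that `x↑ ∩ U` is stationary. -/
def TreeOrder.prune {T : Type} (S : TreeOrder T) (U : Set T) : Set T :=
  {x | x ∈ U ∧ S.TStationary (S.above x ∩ U)}

/-- The diamond principle `◊`: there is a sequence `⟨A_α : α < ω₁⟩` with `A_α ⊆ α`
such that for every `A ⊆ ω₁`, the set `{α : A ∩ α = A_α}` is stationary in `ω₁`. -/
def DiamondPrinciple : Prop :=
  ∃ A : Ordinal.{0} → Set Ordinal.{0},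
    (∀ α, A α ⊆ Set.Iio α) ∧
    ∀ X : Set Ordinal.{0}, X ⊆ Set.Iio (Cardinal.aleph 1).ord →
      IsStationaryIn {α | X ∩ Set.Iio α = A α} (Cardinal.aleph 1).ord

/-! A value `b` is a stationary centre when `ψ⁻¹(N_ε(b))` is stationary for every `ε > 0`.
Pressing down on the limit levels (Fodor's lemma, then the countability of a single level) turns
the local information given by openness, continuity and discreteness at nodes of limit height into
one node `s` that works for stationarily many of them. Applied to continuity this shows that every
stationary `W ⊆ U` contains a point mapped to a stationary centre: otherwise stationarily many
points of `W` would map within `ε/2` of `ψ s`. If there were only countably many centres, some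
fibre `ψ⁻¹{b}` would be stationary; pressing down on it, with discreteness of the fibre, gives a
stationary set mapped into `N_δ(b) \ {b}`, hence a centre other than `b` within `δ` of `b`.
So `b` is an accumulation point of the centres, and there are infinitely many of them. -/

local notation "ω₁" => Cardinal.ord (Cardinal.aleph 1)

open Set Filter

theorem add_one_lt_omega_one {α : Ordinal} (h : α < ω₁) : α + 1 < ω₁ :=
  (Cardinal.isSuccLimit_ord (Cardinal.aleph0_le_aleph 1)).add_one_lt h

theorem countable_Iio_of_lt_omega_one {β : Ordinal.{0}} (h : β < ω₁) : (Iio β).Countable := by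
  rw [← Set.countable_coe_iff, ← Cardinal.mk_le_aleph0_iff, Cardinal.mk_Iio_ordinal,
    ← Cardinal.lift_aleph0.{1, 0}, Cardinal.lift_le, ← Order.lt_succ_iff, Cardinal.succ_aleph0]
  exact Cardinal.lt_ord.1 h

theorem iSup_lt_ord_aleph_one {ι : Type*} [Countable ι] {f : ι → Ordinal.{0}} (h : ∀ i, f i < ω₁) :
    ⨆ i, f i < ω₁ := by
  rw [Cardinal.ord_aleph] at h ⊢
  exact Ordinal.iSup_lt_omega_one h

theorem exists_closure_point {F : Ordinal.{0} → Ordinal.{0}} (hF : ∀ β < ω₁, F β < ω₁)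
    {α : Ordinal} (hα : α < ω₁) : ∃ l, α < l ∧ l < ω₁ ∧ ∀ β < l, F β < l := by
  -- `F` need not be monotone, so iterate the majorant `G` instead.
  set G : Ordinal → Ordinal := fun β => ⨆ γ : Iio β, (F γ + 1)
  have hFG {β γ : Ordinal} (h : γ < β) : F γ < G β :=
    (Order.lt_add_one_iff.2 le_rfl).trans_le
      (Ordinal.le_iSup (fun γ : Iio β => F γ + 1) ⟨γ, h⟩)
  have hG (β : Ordinal) (hβ : β < ω₁) : G β < ω₁ := by
    have := (countable_Iio_of_lt_omega_one hβ).to_subtype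
    exact iSup_lt_ord_aleph_one fun γ => add_one_lt_omega_one (hF γ (γ.2.trans hβ))
  have hcof : Cardinal.aleph0 < Ordinal.cof ω₁ := by
    rw [Cardinal.isRegular_aleph_one.cof_ord]
    exact Cardinal.aleph0_lt_aleph_one
  refine ⟨Ordinal.nfp G (α + 1), (Order.lt_add_one_iff.2 le_rfl).trans_le (Ordinal.le_nfp G _),
    Ordinal.nfp_lt_ord hcof hG (add_one_lt_omega_one hα), fun β hβ => ?_⟩
  obtain ⟨n, hn⟩ := Ordinal.lt_nfp_iff.1 hβ
  refine (hFG hn).trans_le ?_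
  simpa only [Function.iterate_succ_apply'] using Ordinal.iterate_le_nfp G (α + 1) (n + 1)

theorem IsClubIn.exists_next {C : Set Ordinal} {κ : Ordinal} (hC : IsClubIn C κ) :
    ∃ g : Ordinal → Ordinal, ∀ β < κ, g β ∈ C ∧ β < g β ∧ g β < κ := by
  have (β : Ordinal) : ∃ c, β < κ → c ∈ C ∧ β < c ∧ c < κ := by
    by_cases hβ : β < κ
    · exact (hC.2 β hβ).imp fun c hc _ => hc
    · exact ⟨0, fun h => absurd h hβ⟩
  choose g hg using this
  exact ⟨g, hg⟩

theorem isClubIn_univ : IsClubIn univ ω₁ :=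
  ⟨fun _ _ _ _ => mem_univ _, fun α hα =>
    ⟨α + 1, mem_univ _, Order.lt_add_one_iff.2 le_rfl, add_one_lt_omega_one hα⟩⟩

theorem isClubIn_Ioo {γ : Ordinal} (hγ : γ < ω₁) : IsClubIn (Ioo γ ω₁) ω₁ := by
  refine ⟨fun α hα hα0 hlim => ?_, fun α hα => ?_⟩
  · obtain ⟨δ, hδ, -, hδα⟩ := hlim 0 (pos_iff_ne_zero.2 hα0)
    exact ⟨hδ.1.trans hδα, hα⟩
  · have hlt := add_one_lt_omega_one (max_lt hα hγ)
    exact ⟨max α γ + 1, ⟨(le_max_right α γ).trans_lt (Order.lt_add_one_iff.2 le_rfl), hlt⟩,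
      (le_max_left α γ).trans_lt (Order.lt_add_one_iff.2 le_rfl), hlt⟩

theorem isClubIn_setOf_isSuccLimit : IsClubIn {α : Ordinal | Order.IsSuccLimit α} ω₁ := by
  refine ⟨fun α _ hα0 hlim => ?_, fun α hα => ?_⟩
  · refine Ordinal.isSuccLimit_iff.2 ⟨hα0, Order.isSuccPrelimit_iff_succ_lt.2 fun β hβ => ?_⟩
    obtain ⟨δ, -, hβδ, hδα⟩ := hlim β hβ
    exact (Order.succ_le_of_lt hβδ).trans_lt hδα
  · refine ⟨α + Ordinal.omega0, Ordinal.isSuccLimit_add α Ordinal.isSuccLimit_omega0,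
      lt_add_of_pos_right α Ordinal.omega0_pos, ?_⟩
    rw [Cardinal.lt_ord, Ordinal.card_add, Ordinal.card_omega0]
    exact Cardinal.add_lt_of_lt (Cardinal.aleph0_le_aleph 1) (Cardinal.lt_ord.1 hα)
      Cardinal.aleph0_lt_aleph_one

theorem isClubIn_iInter {ι : Type*} [Countable ι] {C : ι → Set Ordinal}
    (hC : ∀ i, IsClubIn (C i) ω₁) : IsClubIn (⋂ i, C i) ω₁ := by
  choose g hg using fun i => (hC i).exists_next
  refine ⟨fun α hα hα0 hlim => mem_iInter.2 fun i => (hC i).1 α hα hα0 fun β hβ => ?_,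
    fun α hα => ?_⟩
  · obtain ⟨γ, hγ, h⟩ := hlim β hβ
    exact ⟨γ, mem_iInter.1 hγ i, h⟩
  obtain ⟨l, hαl, hl, hF⟩ := exists_closure_point (F := fun β => ⨆ i, g i β)
    (fun β hβ => iSup_lt_ord_aleph_one fun i => (hg i β hβ).2.2) hα
  refine ⟨l, mem_iInter.2 fun i => (hC i).1 l hl (ne_bot_of_gt hαl) fun β hβ => ?_, hαl, hl⟩
  obtain ⟨hgC, hβg, -⟩ := hg i β (hβ.trans hl)
  exact ⟨g i β, hgC, hβg, (Ordinal.le_iSup (fun i => g i β) i).trans_lt (hF β hβ)⟩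

theorem IsClubIn.inter {C D : Set Ordinal} (hC : IsClubIn C ω₁) (hD : IsClubIn D ω₁) :
    IsClubIn (C ∩ D) ω₁ := by
  rw [inter_eq_iInter]
  exact isClubIn_iInter (Bool.forall_bool.2 ⟨hD, hC⟩)

theorem isClubIn_diagInter {C : Ordinal → Set Ordinal} (hC : ∀ γ, IsClubIn (C γ) ω₁) :
    IsClubIn {α | α < ω₁ ∧ ∀ γ < α, α ∈ C γ} ω₁ := by
  refine ⟨fun α hα hα0 hlim => ⟨hα, fun γ hγ => (hC γ).1 α hα hα0 fun β hβ => ?_⟩,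
    fun α hα => ?_⟩
  · obtain ⟨δ, hδ, hβγδ, hδα⟩ := hlim (max β γ) (max_lt hβ hγ)
    exact ⟨δ, hδ.2 γ ((le_max_right β γ).trans_lt hβγδ), (le_max_left β γ).trans_lt hβγδ, hδα⟩
  choose g hg using fun γ => (hC γ).exists_next
  have hF (β : Ordinal) (hβ : β < ω₁) : ⨆ γ : Iic β, g γ β < ω₁ := by
    have := ((countable_Iio_of_lt_omega_one (add_one_lt_omega_one hβ)).mono
      (Iic_subset_Iio.2 (Order.lt_add_one_iff.2 le_rfl))).to_subtype
    exact iSup_lt_ord_aleph_one fun γ => (hg γ β hβ).2.2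
  obtain ⟨l, hαl, hl, hlF⟩ := exists_closure_point hF hα
  refine ⟨l, ⟨hl, fun γ hγ => (hC γ).1 l hl (ne_bot_of_gt hαl) fun β hβ => ?_⟩, hαl, hl⟩
  set β' := max β γ
  obtain ⟨hgC, hβg, -⟩ := hg γ β' ((max_lt hβ hγ).trans hl)
  exact ⟨g γ β', hgC, (le_max_left β γ).trans_lt hβg,
    (Ordinal.le_iSup (fun δ : Iic β' => g δ β') ⟨γ, le_max_right β γ⟩).trans_lt
      (hlF β' (max_lt hβ hγ))⟩

theorem not_isStationaryIn_iff {A : Set Ordinal} {κ : Ordinal} :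
    ¬ IsStationaryIn A κ ↔ ∃ C, IsClubIn C κ ∧ A ∩ C = ∅ := by
  simp only [IsStationaryIn, not_forall, not_nonempty_iff_eq_empty, exists_prop]

namespace IsStationaryIn

variable {A : Set Ordinal}

theorem mono {A' : Set Ordinal} {κ : Ordinal} (hA : IsStationaryIn A κ) (h : A ⊆ A') :
    IsStationaryIn A' κ :=
  fun C hC => (hA C hC).mono (inter_subset_inter_left C h)

theorem nonempty (hA : IsStationaryIn A ω₁) : A.Nonempty :=
  (hA univ isClubIn_univ).mono inter_subset_left

theorem inter_isClubIn {C : Set Ordinal} (hA : IsStationaryIn A ω₁) (hC : IsClubIn C ω₁) :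
    IsStationaryIn (A ∩ C) ω₁ := fun D hD => by
  simpa only [inter_assoc] using hA _ (hC.inter hD)

theorem exists_of_subset_iUnion {ι : Type*} [Countable ι] {B : ι → Set Ordinal}
    (hA : IsStationaryIn A ω₁) (hAB : A ⊆ ⋃ i, B i) : ∃ i, IsStationaryIn (B i) ω₁ := by
  by_contra! hB
  choose C hC hBC using fun i => not_isStationaryIn_iff.1 (hB i)
  obtain ⟨α, hαA, hαC⟩ := hA _ (isClubIn_iInter hC)
  obtain ⟨i, hi⟩ := mem_iUnion.1 (hAB hαA)
  exact (eq_empty_iff_forall_notMem.1 (hBC i)) α ⟨hi, mem_iInter.1 hαC i⟩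

/-- Fodor's pressing-down lemma. -/
theorem exists_regressive {ι : Type*} {X : Set ι} {h : ι → Ordinal} {R : ι → Ordinal → Prop}
    (hX : IsStationaryIn (h '' X) ω₁) (hR : ∀ x ∈ X, ∃ γ < h x, R x γ) :
    ∃ γ, IsStationaryIn (h '' {x ∈ X | R x γ}) ω₁ := by
  by_contra! hstat
  choose C hC hdisj using fun γ => not_isStationaryIn_iff.1 (hstat γ)
  obtain ⟨_, ⟨x, hx, rfl⟩, -, hxC⟩ := hX _ (isClubIn_diagInter hC)
  obtain ⟨γ, hγ, hRγ⟩ := hR x hx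
  exact (eq_empty_iff_forall_notMem.1 (hdisj γ)) (h x) ⟨⟨x, ⟨hx, hRγ⟩, rfl⟩, hxC γ hγ⟩

end IsStationaryIn

theorem IsClubIn.isStationaryIn {C : Set Ordinal} (hC : IsClubIn C ω₁) : IsStationaryIn C ω₁ :=
  fun _ hD =>
    let ⟨β, hβ, _⟩ := (hC.inter hD).2 0 (Cardinal.ord_pos.2 (Cardinal.aleph_pos 1))
    ⟨β, hβ⟩

namespace TreeOrder

variable {T : Type} (S : TreeOrder T)

def Ioo (p x : T) : Set T := {z | S.lt p z ∧ S.lt z x}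

def EventuallyBelow (x : T) (A : Set T) : Prop := ∃ p, S.lt p x ∧ S.Ioo p x ⊆ A

variable {S}

theorem height_eq_typein {x y : T} (hy : S.lt y x) :
    S.height y = @Ordinal.typein {z : T // S.lt z x} (fun a b => S.lt a.1 b.1)
      (S.wellOrdered x) ⟨y, hy⟩ := by
  have := S.wellOrdered x
  rw [← Ordinal.type_subrel]
  have := S.wellOrdered y
  exact Ordinal.type_eq.2 ⟨RelIso.mk
    ⟨fun w => ⟨⟨w.1, S.trans w.2 hy⟩, w.2⟩, fun p => ⟨p.1.1, p.2⟩, fun _ => rfl, fun _ => rfl⟩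
    Iff.rfl⟩

theorem lt_iff_height_lt {x y z : T} (hy : S.lt y x) (hz : S.lt z x) :
    S.lt y z ↔ S.height y < S.height z := by
  have := S.wellOrdered x
  rw [height_eq_typein hy, height_eq_typein hz, Ordinal.typein_lt_typein]

theorem height_lt_height {x y : T} (hy : S.lt y x) : S.height y < S.height x := by
  have := S.wellOrdered x
  rw [height_eq_typein hy]
  exact Ordinal.typein_lt_type _ _

theorem exists_lt_height_eq {x : T} {δ : Ordinal} (hδ : δ < S.height x) :
    ∃ y, S.lt y x ∧ S.height y = δ := by
  have := S.wellOrdered x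
  obtain ⟨a, ha⟩ := Ordinal.typein_surj (fun a b : {w : T // S.lt w x} => S.lt a.1 b.1) hδ
  exact ⟨a.1, a.2, (height_eq_typein a.2).trans ha⟩

theorem exists_mem_Ioo_height_eq {p x : T} {δ : Ordinal} (hpx : S.lt p x)
    (hpδ : S.height p < δ) (hδx : δ < S.height x) : ∃ z ∈ S.Ioo p x, S.height z = δ := by
  obtain ⟨z, hzx, rfl⟩ := exists_lt_height_eq hδx
  exact ⟨z, ⟨(lt_iff_height_lt hpx hzx).2 hpδ, hzx⟩, rfl⟩

theorem height_lt_omega_one (htop : S.level ω₁ = ∅) (x : T) : S.height x < ω₁ := by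
  by_contra! h
  obtain ⟨y, hy⟩ : ∃ y, S.height y = ω₁ := h.eq_or_lt.elim (fun h => ⟨x, h.symm⟩)
    fun h => (exists_lt_height_eq h).imp fun _ => And.right
  exact eq_empty_iff_forall_notMem.1 htop y hy

theorem Ioo_subset_Ioo_of_height_le {p q x : T} (hp : S.lt p x) (hq : S.lt q x)
    (h : S.height p ≤ S.height q) : S.Ioo q x ⊆ S.Ioo p x := fun _ hz =>
  ⟨(lt_iff_height_lt hp hz.2).2 (h.trans_lt ((lt_iff_height_lt hq hz.2).1 hz.1)), hz.2⟩

theorem EventuallyBelow.mono {x : T} {A A' : Set T} (h : S.EventuallyBelow x A) (hA : A ⊆ A') :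
    S.EventuallyBelow x A' :=
  let ⟨p, hp, hpA⟩ := h
  ⟨p, hp, hpA.trans hA⟩

theorem EventuallyBelow.inter {x : T} {A A' : Set T} (h : S.EventuallyBelow x A)
    (h' : S.EventuallyBelow x A') : S.EventuallyBelow x (A ∩ A') := by
  obtain ⟨p, hp, hpA⟩ := h
  obtain ⟨q, hq, hqA⟩ := h'
  rcases le_total (S.height p) (S.height q) with hpq | hqp
  · exact ⟨q, hq, subset_inter ((Ioo_subset_Ioo_of_height_le hp hq hpq).trans hpA) hqA⟩
  · exact ⟨p, hp, subset_inter hpA ((Ioo_subset_Ioo_of_height_le hq hp hqp).trans hqA)⟩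

theorem TreeOpen.eventuallyBelow {U : Set T} (hU : S.TreeOpen U) {x : T} (hx : x ∈ U)
    (hlim : Order.IsSuccLimit (S.height x)) : S.EventuallyBelow x U :=
  let ⟨p, hp, hpU⟩ := hU x hx hlim
  ⟨p, hp, fun z hz => hpU z hz.1 hz.2⟩

theorem TDiscrete.eventuallyBelow_compl {F : Set T} (hF : S.TDiscrete F) {x : T} (hx : x ∈ F)
    (hlim : Order.IsSuccLimit (S.height x)) : S.EventuallyBelow x Fᶜ := by
  obtain ⟨V, hV, hxV, hVF⟩ := hF x hx
  obtain ⟨p, hp, hpV⟩ := hV.eventuallyBelow hxV hlim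
  refine ⟨p, hp, fun z hz hzF => S.irrefl x ?_⟩
  have hzx : z ∈ V ∩ F := ⟨hpV hz, hzF⟩
  rw [hVF, mem_singleton_iff] at hzx
  exact hzx ▸ hz.2

namespace TStationary

variable {W W' : Set T}

theorem mono (hW : S.TStationary W) (h : W ⊆ W') : S.TStationary W' :=
  IsStationaryIn.mono hW (image_mono h)

theorem nonempty (hW : S.TStationary W) : W.Nonempty :=
  (IsStationaryIn.nonempty hW).of_image

theorem exists_of_subset_iUnion {ι : Type*} [Countable ι] {V : ι → Set T}
    (hW : S.TStationary W) (h : W ⊆ ⋃ i, V i) : ∃ i, S.TStationary (V i) :=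
  IsStationaryIn.exists_of_subset_iUnion hW ((image_mono h).trans (image_iUnion).subset)

theorem union (hW : S.TStationary (W ∪ W')) : S.TStationary W ∨ S.TStationary W' := by
  rw [union_eq_iUnion] at hW
  obtain ⟨b, hb⟩ := hW.exists_of_subset_iUnion subset_rfl
  cases b
  exacts [Or.inr hb, Or.inl hb]

theorem inter_height_mem {C : Set Ordinal} (hW : S.TStationary W) (hC : IsClubIn C ω₁) :
    S.TStationary {x ∈ W | S.height x ∈ C} := by
  refine (IsStationaryIn.inter_isClubIn hW hC).mono ?_
  rintro _ ⟨⟨x, hx, rfl⟩, hxC⟩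
  exact ⟨x, ⟨hx, hxC⟩, rfl⟩

theorem exists_uniform_eventuallyBelow (hT : S.IsOmega1Tree) (hW : S.TStationary W)
    {A : T → Set T} (hA : ∀ x ∈ W, Order.IsSuccLimit (S.height x) → S.EventuallyBelow x (A x)) :
    ∃ s, S.TStationary {x ∈ W | S.lt s x ∧ s ∈ A x ∧ S.Ioo s x ⊆ A x} := by
  -- Fodor fixes the height `γ` of the witnesses `p`; the node of height `γ + 1` below `x`
  -- then ranges over a countable level.
  obtain ⟨γ, hγ⟩ := IsStationaryIn.exists_regressive
      (hW.inter_height_mem isClubIn_setOf_isSuccLimit)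
    (R := fun x γ => ∃ p, S.lt p x ∧ S.height p = γ ∧ S.Ioo p x ⊆ A x) fun x hx =>
      let ⟨p, hp, hpA⟩ := hA x hx.1 hx.2
      ⟨_, height_lt_height hp, p, hp, rfl, hpA⟩
  have hγω₁ : γ + 1 < ω₁ := by
    obtain ⟨x, -, p, -, rfl, -⟩ := TStationary.nonempty hγ
    exact add_one_lt_omega_one (height_lt_omega_one hT.2.2 p)
  have hW₂ := TStationary.inter_height_mem hγ (isClubIn_Ioo hγω₁)
  have := (hT.2.1 (γ + 1)).to_subtype
  obtain ⟨⟨s, _⟩, hs⟩ := hW₂.exists_of_subset_iUnion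
      (V := fun s : S.level (γ + 1) => {x ∈ W | S.lt s x ∧ s.1 ∈ A x ∧ S.Ioo s x ⊆ A x}) <| by
    rintro x ⟨⟨⟨hxW, -⟩, p, hpx, rfl, hpA⟩, hγx, -⟩
    obtain ⟨s, hs, hsγ⟩ := exists_mem_Ioo_height_eq hpx (Order.lt_add_one_iff.2 le_rfl) hγx
    exact mem_iUnion.2 ⟨⟨s, hsγ⟩, hxW, hs.2, hpA hs,
      (Ioo_subset_Ioo_of_height_le hpx hs.2 (height_lt_height hs.1).le).trans hpA⟩
  exact ⟨s, hs⟩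

theorem biUnion_Ioo (hT : S.IsOmega1Tree) (hW : S.TStationary W) {s : T}
    (hs : ∀ x ∈ W, S.lt s x) : S.TStationary (⋃ x ∈ W, S.Ioo s x) := by
  refine IsStationaryIn.mono (isClubIn_Ioo (height_lt_omega_one hT.2.2 s)).isStationaryIn ?_
  rintro β ⟨hsβ, hβ⟩
  obtain ⟨x, hxW, hβx⟩ := (hW.inter_height_mem (isClubIn_Ioo hβ)).nonempty
  obtain ⟨z, hz, rfl⟩ := exists_mem_Ioo_height_eq (hs x hxW) hsβ hβx.1
  exact ⟨z, mem_biUnion hxW hz, rfl⟩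

end TStationary

variable {B : Type*}

def TContinuousOn [TopologicalSpace B] (S : TreeOrder T) (ψ : T → B) (U : Set T) : Prop :=
  ∀ V : Set B, IsOpen V → ∃ W : Set T, S.TreeOpen W ∧ {x ∈ U | ψ x ∈ V} = W ∩ U

theorem TContinuousOn.eventuallyBelow_preimage [TopologicalSpace B] {ψ : T → B} {U : Set T}
    (hψ : S.TContinuousOn ψ U) (hU : S.TreeOpen U) {V : Set B} (hV : IsOpen V) {x : T}
    (hx : x ∈ U) (hxV : ψ x ∈ V) (hlim : Order.IsSuccLimit (S.height x)) :
    S.EventuallyBelow x {z ∈ U | ψ z ∈ V} := by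
  obtain ⟨W, hW, hWU⟩ := hψ V hV
  have hxW : x ∈ W ∩ U := hWU ▸ ⟨hx, hxV⟩
  rw [hWU]
  exact (hW.eventuallyBelow hxW.1 hlim).inter (hU.eventuallyBelow hx hlim)

variable [MetricSpace B]

def stationaryCenters (S : TreeOrder T) (U : Set T) (ψ : T → B) : Set B :=
  {b | ∀ ε > (0 : ℝ), S.TStationary {x ∈ U | dist (ψ x) b < ε}}

variable {U : Set T} {ψ : T → B}

theorem exists_mem_stationaryCenters (hT : S.IsOmega1Tree) (hU : S.TreeOpen U)
    (hψ : S.TContinuousOn ψ U) {W : Set T} (hWU : W ⊆ U) (hW : S.TStationary W) :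
    ∃ x ∈ W, ψ x ∈ S.stationaryCenters U ψ := by
  by_contra! hW'
  have hcover : W ⊆ ⋃ n : ℕ,
      {x ∈ W | ¬ S.TStationary {z ∈ U | dist (ψ z) (ψ x) < 1 / (n + 1)}} := by
    intro x hx
    obtain ⟨ε, hε, hx'⟩ : ∃ ε > (0 : ℝ), ¬ S.TStationary {z ∈ U | dist (ψ z) (ψ x) < ε} := by
      simpa [stationaryCenters] using hW' x hx
    obtain ⟨n, hn⟩ := exists_nat_one_div_lt hε
    exact mem_iUnion.2 ⟨n, hx, fun h => hx' (h.mono fun z hz => ⟨hz.1, hz.2.trans hn⟩)⟩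
  obtain ⟨n, hn⟩ := hW.exists_of_subset_iUnion hcover
  set ε : ℝ := 1 / (n + 1)
  have hε : 0 < ε / 2 := by positivity
  obtain ⟨s, hs⟩ := hn.exists_uniform_eventuallyBelow hT
    (A := fun x => {z ∈ U | ψ z ∈ Metric.ball (ψ x) (ε / 2)}) fun x hx =>
      hψ.eventuallyBelow_preimage hU Metric.isOpen_ball (hWU hx.1) (Metric.mem_ball_self hε)
  obtain ⟨x₀, ⟨-, hx₀⟩, -, ⟨-, hsx₀⟩, -⟩ := hs.nonempty
  refine hx₀ (hs.mono ?_)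
  rintro x ⟨⟨hxW, -⟩, -, ⟨-, hsx⟩, -⟩
  refine ⟨hWU hxW, ?_⟩
  calc dist (ψ x) (ψ x₀) ≤ dist (ψ s) (ψ x) + dist (ψ s) (ψ x₀) := dist_triangle_left _ _ _
    _ < ε / 2 + ε / 2 := add_lt_add hsx hsx₀
    _ = ε := add_halves ε

theorem exists_tStationary_fiber (hT : S.IsOmega1Tree) (hU : S.TreeOpen U)
    (hUstat : S.TStationary U) (hψ : S.TContinuousOn ψ U)
    (hcount : (S.stationaryCenters U ψ).Countable) : ∃ b, S.TStationary {x ∈ U | ψ x = b} := by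
  set Z := S.stationaryCenters U ψ
  have hsplit : U ⊆ {x ∈ U | ψ x ∉ Z} ∪ ⋃ b : Z, {x ∈ U | ψ x = b} := fun x hx =>
    (em (ψ x ∈ Z)).elim (fun h => Or.inr (mem_iUnion.2 ⟨⟨_, h⟩, hx, rfl⟩)) fun h => Or.inl ⟨hx, h⟩
  have := hcount.to_subtype
  rcases (hUstat.mono hsplit).union with h | h
  · obtain ⟨x, ⟨-, hx⟩, hxZ⟩ := exists_mem_stationaryCenters hT hU hψ (sep_subset _ _) h
    exact absurd hxZ hx
  · obtain ⟨⟨b, _⟩, hb⟩ := h.exists_of_subset_iUnion subset_rfl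
    exact ⟨b, hb⟩

theorem accPt_stationaryCenters (hT : S.IsOmega1Tree) (hU : S.TreeOpen U)
    (hψ : S.TContinuousOn ψ U) (hdisc : ∀ b : B, S.TDiscrete {x ∈ U | ψ x = b}) {b : B}
    (hb : S.TStationary {x ∈ U | ψ x = b}) : AccPt b (𝓟 (S.stationaryCenters U ψ)) := by
  rw [accPt_iff_nhds]
  intro V hV
  obtain ⟨δ, hδ, hδV⟩ := Metric.mem_nhds_iff.1 hV
  set A := {z ∈ U | ψ z ∈ Metric.ball b δ} ∩ {x ∈ U | ψ x = b}ᶜ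
  obtain ⟨s, hs⟩ := hb.exists_uniform_eventuallyBelow hT (A := fun _ => A)
    fun x ⟨hxU, hxb⟩ hlim =>
      (hψ.eventuallyBelow_preimage hU Metric.isOpen_ball hxU
        (Metric.mem_ball.2 (by simpa [hxb] using hδ)) hlim).inter
      ((hdisc b).eventuallyBelow_compl ⟨hxU, hxb⟩ hlim)
  have hA : S.TStationary A :=
    (hs.biUnion_Ioo hT fun x hx => hx.2.1).mono (iUnion₂_subset fun x hx => hx.2.2.2)
  obtain ⟨z, ⟨⟨hzU, hzδ⟩, hzb⟩, hzZ⟩ :=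
    exists_mem_stationaryCenters hT hU hψ (fun z hz => hz.1.1) hA
  exact ⟨ψ z, ⟨hδV hzδ, hzZ⟩, fun h => hzb ⟨hzU, h⟩⟩

end TreeOrder

/-- If `U ⊆ T` is a stationary open set, `B` a metric space, and `ψ : U → B` continuous
(w.r.t. the subspace tree topology on `U`) with every fiber discrete in the tree topology,
then there are infinitely many `b ∈ B` such that `ψ⁻¹(N_ε(b))` is stationary for all
`ε > 0`. -/
theorem many_stationary_centers {T : Type} (S : TreeOrder T) (hT : S.IsOmega1Tree)
    (U : Set T) (hUopen : S.TreeOpen U) (hUstat : S.TStationary U)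
    (B : Type) [MetricSpace B] (ψ : T → B)
    (hcont : ∀ V : Set B, IsOpen V →
      ∃ W : Set T, S.TreeOpen W ∧ {x ∈ U | ψ x ∈ V} = W ∩ U)
    (hdisc : ∀ b : B, S.TDiscrete {x ∈ U | ψ x = b}) :
    {b : B | ∀ ε > (0 : ℝ), S.TStationary {x ∈ U | dist (ψ x) b < ε}}.Infinite := by
  by_contra hfin
  obtain ⟨b, hb⟩ := TreeOrder.exists_tStationary_fiber hT hUopen hUstat hcont
    (Set.not_infinite.1 hfin).countable
  exact hfin (Set.Infinite.of_accPt (TreeOrder.accPt_stationaryCenters hT hUopen hcont hdisc hb))
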